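/- Let p be a positive natural number, let x : Fin p → X be points of a type X, let y : Fin p → ℝ be signed labels with y(j) ∈ {−1, +1} for all j, let f : Fin p → (X → ℝ) be base learners such that y(j)·f(j)(x(j)) > 0 for every j (each base learner is correct on its own source's point), let Q : Fin p → X → ℝ be the conditional function with Q(k)(x(j)) = 1 if k = j and 0 otherwise, and let α : Fin p → ℝ be base learner weights with α(k) > 0 for all k. Define the ensemble F(z) = ∑_{k} α(k)·Q(k)(z)·f(k)(z). Then for every probability vector λ : Fin p → ℝ (i.e., λ(j) ≥ 0 for all j and ∑_j λ(j) = 1), the mixture 0-1 loss ∑_j λ(j)·𝟙[y(j)·F(x(j)) ≤ 0] equals 0. -/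

import Mathlib

open Finset

theorem ensemble_apply_of_source_point {ι X : Type*} [Fintype ι] [DecidableEq ι]
    (α : ι → ℝ) (Q f : ι → X → ℝ) {z : X} {j : ι}
    (hQ : ∀ k, Q k z = if k = j then 1 else 0) :
    ∑ k, α k * Q k z * f k z = α j * f j z := by
  simp [hQ]

theorem mixture_zeroOneLoss_eq_zero_of_margin_pos {ι : Type*} [Fintype ι]
    (lam margin : ι → ℝ) (hmargin : ∀ j, 0 < margin j) :
    ∑ j, lam j * (if margin j ≤ 0 then (1 : ℝ) else 0) = 0 :=
  sum_eq_zero fun j _ => by rw [if_neg (hmargin j).not_ge, mul_zero]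

theorem general_conditional_ensemble_zero_loss_general {X : Type*}
    (p : ℕ)
    (x : Fin p → X) (y : Fin p → ℝ)
    (f : Fin p → X → ℝ) (hf : ∀ j, y j * f j (x j) > 0)
    (Q : Fin p → X → ℝ) (hQ : ∀ k j, Q k (x j) = if k = j then 1 else 0)
    (α : Fin p → ℝ) (hα : ∀ k, 0 < α k)
    (F : X → ℝ) (hF : ∀ z, F z = ∑ k, α k * Q k z * f k z)
    (lam : Fin p → ℝ) :
    ∑ j, lam j * (if y j * F (x j) ≤ 0 then (1 : ℝ) else 0) = 0 := by
  refine mixture_zeroOneLoss_eq_zero_of_margin_pos lam _ fun j => ?_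
  rw [hF, ensemble_apply_of_source_point α Q f (hQ · j), mul_left_comm]
  exact mul_pos (hα j) (hf j)

/-- General p-source form of Proposition 4.2: with p weak sources, each
represented by a point x(j) with signed label y(j) ∈ {−1,+1}, base learners
f(j) correct on their own source's point, the exact source-matching conditional
function Q, and positive ensemble weights α, the Q-modulated ensemble
F(z) = ∑ₖ α(k)·Q(k)(z)·f(k)(z) has zero 0-1 loss on every λ-mixture of the
source points. -/
theorem general_conditional_ensemble_zero_loss {X : Type*}
    (p : ℕ) (hp : 0 < p)
    (x : Fin p → X) (y : Fin p → ℝ) (hy : ∀ j, y j = -1 ∨ y j = 1)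
    (f : Fin p → X → ℝ) (hf : ∀ j, y j * f j (x j) > 0)
    (Q : Fin p → X → ℝ) (hQ : ∀ k j, Q k (x j) = if k = j then 1 else 0)
    (α : Fin p → ℝ) (hα : ∀ k, 0 < α k)
    (F : X → ℝ) (hF : ∀ z, F z = ∑ k, α k * Q k z * f k z)
    (lam : Fin p → ℝ) (hlam0 : ∀ j, 0 ≤ lam j) (hlam1 : ∑ j, lam j = 1) :
    ∑ j, lam j * (if y j * F (x j) ≤ 0 then (1 : ℝ) else 0) = 0 :=
  general_conditional_ensemble_zero_loss_general p x y f hf Q hQ α hα F hF lam
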